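/- arXiv:2006.10851 — 3 statements merged into one kernel-verified Lean document; each statement's English description precedes it below -/
import Mathlib

section
/- Let C be a category with a functor F : C ⥤ D, and let π : Tw(C) ⥤ C be the source projection of the twisted arrow category. If the colimit of F exists, then the colimit of π ⋙ F exists, and the canonical morphism colim(π ⋙ F) ⟶ colim(F) induced by restricting the colimit cocone of F along π is an isomorphism. -/
/-!
For any category `C`, the source projection `π : Tw(C) ⥤ C` from the twisted arrow
category, sending a twisted arrow `(f : i ⟶ j)` to its source `i`, restricts colimits along
itself to isomorphic colimits.

Here `Tw(C)` has as objects the morphisms `f : i ⟶ j` of `C`, and a morphism between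
the twisted arrows `(f : i ⟶ j)` and `(f' : i' ⟶ j')` is a twisted commutative square,
consisting of morphisms `g : i ⟶ i'` and `h : j' ⟶ j` with `f = h ∘ f' ∘ g`.
-/

universe v u v₂ u₂

open CategoryTheory

/-- The twisted arrow category of `C`: objects are the morphisms of `C`. -/
structure TwistedArrow (C : Type u) [Category.{v} C] : Type max u v where
  {left : C}
  {right : C}
  hom : left ⟶ right

namespace TwistedArrow

variable {C : Type u} [Category.{v} C]

/-- A morphism of twisted arrows: a twisted commutative square. -/
@[ext]
structure Hom (f g : TwistedArrow C) : Type v where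
  left : f.left ⟶ g.left
  right : g.right ⟶ f.right
  w : f.hom = left ≫ g.hom ≫ right := by aesop_cat

instance : Category.{v} (TwistedArrow C) where
  Hom f g := Hom f g
  id f := { left := 𝟙 f.left, right := 𝟙 f.right }
  comp u v :=
    { left := u.left ≫ v.left
      right := v.right ≫ u.right
      w := by rw [u.w, v.w]; simp }

@[simp] theorem id_left (f : TwistedArrow C) : Hom.left (𝟙 f) = 𝟙 f.left := rfl
@[simp] theorem id_right (f : TwistedArrow C) : Hom.right (𝟙 f) = 𝟙 f.right := rfl
@[simp] theorem comp_left {f g h : TwistedArrow C} (u : f ⟶ g) (v : g ⟶ h) :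
    Hom.left (u ≫ v) = u.left ≫ v.left := rfl
@[simp] theorem comp_right {f g h : TwistedArrow C} (u : f ⟶ g) (v : g ⟶ h) :
    Hom.right (u ≫ v) = v.right ≫ u.right := rfl

/-- The source projection `Tw(C) ⥤ C`, sending a twisted arrow to its source. -/
@[simps]
def proj (C : Type u) [Category.{v} C] : TwistedArrow C ⥤ C where
  obj f := f.left
  map u := u.left

end TwistedArrow

open CategoryTheory.Limits

namespace TwistedArrow

variable {C : Type u} [Category.{v} C]

def homOfPrecomp {a : C} (f : TwistedArrow C) (u : a ⟶ f.left) : mk (u ≫ f.hom) ⟶ f :=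
  Hom.mk u (𝟙 _)

def homToId {a b : C} (g : a ⟶ b) : mk g ⟶ mk (𝟙 a) :=
  Hom.mk (𝟙 a) g

/-- Every `X = (u : c ⟶ i, f : i ⟶ j)` is linked to `(𝟙 c, 𝟙 c)` through `(𝟙 c, u ≫ f)`,
which maps to both. -/
theorem zigzag_structuredArrow_mk_id {c : C} (X : StructuredArrow c (proj C)) :
    Zigzag X (StructuredArrow.mk (Y := mk (𝟙 c)) (𝟙 c)) :=
  Zigzag.of_inv_hom
    (StructuredArrow.homMk (homOfPrecomp X.right X.hom) (Category.id_comp _) :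
      StructuredArrow.mk (Y := mk (X.hom ≫ X.right.hom)) (𝟙 c) ⟶ X)
    (StructuredArrow.homMk (homToId (X.hom ≫ X.right.hom)) (Category.comp_id _))

instance final_proj : (proj C).Final where
  out c :=
    have : Nonempty (StructuredArrow c (proj C)) := ⟨StructuredArrow.mk (Y := mk (𝟙 c)) (𝟙 c)⟩
    zigzag_isConnected fun X Y =>
      (zigzag_structuredArrow_mk_id X).trans (zigzag_structuredArrow_mk_id Y).symm

end TwistedArrow

/-- If the colimit of `F : C ⥤ D` exists, then the colimit of `π ⋙ F` exists, where
`π : Tw(C) ⥤ C` is the source projection of the twisted arrow category, and the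
canonical morphism `colim (π ⋙ F) ⟶ colim F`, induced by restricting the colimit
cocone of `F` along `π`, is an isomorphism. -/
theorem hasColimit_twistedArrow_proj_comp_and_isIso_pre
    {C : Type u} [Category.{v} C] {D : Type u₂} [Category.{v₂} D]
    (F : C ⥤ D) [HasColimit F] :
    HasColimit (TwistedArrow.proj C ⋙ F) ∧
      ∀ [HasColimit (TwistedArrow.proj C ⋙ F)],
        IsIso (colimit.pre F (TwistedArrow.proj C)) :=
  ⟨Functor.Final.comp_hasColimit (TwistedArrow.proj C), inferInstance⟩
end

section
/- Let C be a category with a functor F : C ⥤ D, and let π : Tw(C) ⥤ C be the source projection of the twisted arrow category. If the limit of F exists, then the limit of π ⋙ F exists, and the canonical morphism lim(F) ⟶ lim(π ⋙ F) induced by restricting the limit cone of F along π is an isomorphism. -/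
/-!
For any category `C`, the source projection `π : Tw(C) ⥤ C` from the twisted arrow
category, sending a twisted arrow `(f : i ⟶ j)` to its source `i`, restricts limits along
itself to isomorphic colimits.

Here `Tw(C)` has as objects the morphisms `f : i ⟶ j` of `C`, and a morphism between
the twisted arrows `(f : i ⟶ j)` and `(f' : i' ⟶ j')` is a twisted commutative square,
consisting of morphisms `g : i ⟶ i'` and `h : j' ⟶ j` with `f = h ∘ f' ∘ g`.
-/

universe v u v₂ u₂

open CategoryTheory

/-! The source projection is an initial functor: in the comma category of twisted arrows
`f : i ⟶ j` equipped with `u : i ⟶ c`, every object `(f, u)` is joined to `(𝟙 c, 𝟙 c)` by the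
zigzag `(f, u) ⟶ (𝟙 i, u) ⟵ (u, u) ⟶ (𝟙 c, 𝟙 c)`, whose middle object is `u` itself viewed
as a twisted arrow. Limits are therefore unchanged by
restriction along it. -/

namespace TwistedArrow

variable {C : Type u} [Category.{v} C]

def toIdLeft (f : TwistedArrow C) : f ⟶ mk (𝟙 f.left) where
  left := 𝟙 f.left
  right := f.hom

def toIdRight (f : TwistedArrow C) : f ⟶ mk (𝟙 f.right) where
  left := f.hom
  right := 𝟙 f.right

abbrev costructuredArrowMk {c : C} (f : TwistedArrow C) (u : f.left ⟶ c) :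
    CostructuredArrow (proj C) c :=
  CostructuredArrow.mk (S := proj C) u

theorem zigzag_costructuredArrowMk_id {c : C} (f : TwistedArrow C) (u : f.left ⟶ c) :
    Zigzag (costructuredArrowMk f u) (costructuredArrowMk (mk (𝟙 c)) (𝟙 c)) := by
  let idSource := costructuredArrowMk (mk (𝟙 f.left)) u
  let ofU := costructuredArrowMk (mk u) u
  let fToIdSource : costructuredArrowMk f u ⟶ idSource :=
    CostructuredArrow.homMk (toIdLeft f) (Category.id_comp u)
  let ofUToIdSource : ofU ⟶ idSource :=
    CostructuredArrow.homMk (toIdLeft (mk u)) (Category.id_comp u)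
  let ofUToIdTarget : ofU ⟶ costructuredArrowMk (mk (𝟙 c)) (𝟙 c) :=
    CostructuredArrow.homMk (toIdRight (mk u)) (Category.comp_id u)
  exact (Zigzag.of_hom_inv fToIdSource ofUToIdSource).trans (Zigzag.of_hom ofUToIdTarget)

instance proj_initial : (proj C).Initial where
  out c :=
    have : Nonempty (CostructuredArrow (proj C) c) := ⟨costructuredArrowMk (mk (𝟙 c)) (𝟙 c)⟩
    zigzag_isConnected fun A B => by
      obtain ⟨f, u, rfl⟩ := A.mk_surjective
      obtain ⟨g, v, rfl⟩ := B.mk_surjective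
      exact (zigzag_costructuredArrowMk_id f u).trans (zigzag_costructuredArrowMk_id g v).symm

end TwistedArrow

open CategoryTheory.Limits

/-- If the limit of `F : C ⥤ D` exists, then the limit of `π ⋙ F` exists, where
`π : Tw(C) ⥤ C` is the source projection of the twisted arrow category, and the
canonical morphism `lim F ⟶ lim (π ⋙ F)`, induced by restricting the limit cone of
`F` along `π`, is an isomorphism. -/
theorem hasLimit_twistedArrow_proj_comp_and_isIso_pre
    {C : Type u} [Category.{v} C] {D : Type u₂} [Category.{v₂} D]
    (F : C ⥤ D) [HasLimit F] :
    HasLimit (TwistedArrow.proj C ⋙ F) ∧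
      ∀ [HasLimit (TwistedArrow.proj C ⋙ F)],
        IsIso (limit.pre F (TwistedArrow.proj C)) :=
  ⟨Functor.Initial.comp_hasLimit _, Functor.Initial.limit_pre_isIso _⟩
end

section
/- Let C be a small category possessing an initial object. The localization of C at the class of all morphisms of C is equivalent to the terminal category (the category with one object and only the identity morphism). -/
/-!
The maps out of the initial object `⊥` form a natural transformation from the constant functor
at `⊥` to the identity of `C`. After applying `L` all of its components become invertible, and
by the universal property of the localization it descends to a natural isomorphism from the
constant functor at `L ⊥` to the identity of `D`. A category whose identity functor is
isomorphic to a constant functor is equivalent to the point.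
-/

universe w u v₂ u₂

open CategoryTheory CategoryTheory.Limits

namespace CategoryTheory

variable {C : Type*} [Category* C] {D : Type*} [Category* D]

noncomputable def Equivalence.punitOfConstIsoId {d : D} (e : (Functor.const D).obj d ≅ 𝟭 D) :
    D ≌ Discrete PUnit.{w + 1} :=
  Equivalence.mk (Functor.star D) (Functor.fromPUnit d) e.symm (Functor.punitExt _ _)

noncomputable def Limits.IsInitial.constIsoOfIsInvertedBy {I : C} (hI : IsInitial I) (L : C ⥤ D)
    (hL : (⊤ : MorphismProperty C).IsInvertedBy L) :
    L ⋙ (Functor.const D).obj (L.obj I) ≅ L :=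
  NatIso.ofComponents
    (fun X => haveI := @hL _ _ (hI.to X) trivial; asIso (L.map (hI.to X)))
    (fun f => by simp [← L.map_comp])

end CategoryTheory

/-- If `C` is a small category with an initial object, then any localization of `C` at
the class of all morphisms of `C` is equivalent to the terminal category (the category
with one object and only the identity morphism). -/
theorem localization_at_top_equiv_terminal_of_hasInitial
    (C : Type u) [SmallCategory C] [HasInitial C]
    {D : Type u₂} [Category.{v₂} D] (L : C ⥤ D)
    [L.IsLocalization (⊤ : MorphismProperty C)] :
    Nonempty (D ≌ Discrete PUnit.{1}) :=
  ⟨Equivalence.punitOfConstIsoId (d := L.obj (⊥_ C)) <|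
    Localization.liftNatIso L ⊤ _ L _ (𝟭 D) <|
      initialIsInitial.constIsoOfIsInvertedBy L (Localization.inverts L ⊤)⟩
end
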